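/- arXiv:0809.1504 — 3 statements merged into one kernel-verified Lean document; each statement's English description precedes it below -/
import Mathlib

section
/- With S a small category, F : S → X, G : S → Y functors, and A a category admitting the relevant Kan extensions: the functor S¹ : (X ⥤ A) → (Y ⥤ A) sending T to the left Kan extension of T ∘ F along G is left adjoint to the functor S₁ : (Y ⥤ A) → (X ⥤ A) sending V to the right Kan extension of V ∘ G along F. That is, there is a bijection, natural in T and V, between natural transformations S¹T ⟶ V and natural transformations T ⟶ S₁V. -/
open CategoryTheory

universe v₃ u₃ u

/-- The right satellite functor `S¹ : (X ⥤ A) ⥤ (Y ⥤ A)`, `T ↦ Lan_G (T ∘ F)`,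
is left adjoint to the left satellite functor `S₁ : (Y ⥤ A) ⥤ (X ⥤ A)`,
`V ↦ Ran_F (V ∘ G)`. -/
theorem satellite_adjunction {X Y S : Type u} [SmallCategory X] [SmallCategory Y]
    [SmallCategory S] {A : Type u₃} [Category.{v₃} A]
    (F : S ⥤ X) (G : S ⥤ Y)
    [∀ H : S ⥤ A, G.HasLeftKanExtension H]
    [∀ H : S ⥤ A, F.HasRightKanExtension H] :
    Nonempty
      (((Functor.whiskeringLeft S X A).obj F ⋙ G.lan) ⊣
        ((Functor.whiskeringLeft S Y A).obj G ⋙ F.ran)) :=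
  ⟨(F.ranAdjunction A).comp (G.lanAdjunction A)⟩
end

section
/- Let (T, δ, V) be a right universal S-connected pair (so for every V' : Y → A and natural transformation δ' : T∘F ⟶ V'∘G there is a unique φ : V ⟶ V' with (φ ∘ G) ∘ δ = δ'). If K : A → B is a functor admitting a right adjoint, then the pair (K∘T, K∘δ, K∘V) is also right universal, where K∘δ : K∘T∘F ⟶ K∘V∘G is the whiskered transformation. -/
/-!
Let `R` be a right adjoint of `K`. Transposing objectwise along `K ⊣ R` identifies
transformations `V ⋙ K ⟶ V'` with `V ⟶ V' ⋙ R`, and `F ⋙ T ⋙ K ⟶ G ⋙ V'` with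
`F ⋙ T ⟶ G ⋙ V' ⋙ R`, compatibly with precomposing by `δ` (resp. `K δ`) and whiskering
by `G`. Under these bijections the factorization problem for `(T ⋙ K, K δ, V ⋙ K)`
against `V'` becomes the one for `(T, δ, V)` against `V' ⋙ R`.
-/

open CategoryTheory

universe v₁ v₂ v₃ v₄ u₁ u₂ u₃ u₄ u

/-- A right universal `S`-connected pair `(T, δ, V)`. -/
def RightUniversal {X : Type u₁} [Category.{v₁} X] {Y : Type u₂} [Category.{v₂} Y]
    {A : Type u₃} [Category.{v₃} A] {S : Type u} [SmallCategory S]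
    (F : S ⥤ X) (G : S ⥤ Y) (T : X ⥤ A) (V : Y ⥤ A) (δ : F ⋙ T ⟶ G ⋙ V) : Prop :=
  ∀ (V' : Y ⥤ A) (δ' : F ⋙ T ⟶ G ⋙ V'),
    ∃! φ : V ⟶ V', δ ≫ Functor.whiskerLeft G φ = δ'

namespace CategoryTheory.Adjunction

variable {S Y A B : Type*} [Category* S] [Category* Y] [Category* A] [Category* B]
  {K : A ⥤ B} {R : B ⥤ A} (adj : K ⊣ R)

theorem whiskerRight_homEquiv_whiskerLeft (G : S ⥤ Y) {V : Y ⥤ A} {V' : Y ⥤ B}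
    (ψ : V ⋙ K ⟶ V') :
    (adj.whiskerRight S).homEquiv (G ⋙ V) (G ⋙ V') (Functor.whiskerLeft G ψ) =
      Functor.whiskerLeft G ((adj.whiskerRight Y).homEquiv V V' ψ) := by
  ext
  rw [homEquiv_unit, homEquiv_unit]
  simp

theorem whiskerRight_homEquiv_comp_whiskerLeft {D : S ⥤ A} (G : S ⥤ Y) {V : Y ⥤ A}
    {V' : Y ⥤ B} (δ : D ⟶ G ⋙ V) (ψ : V ⋙ K ⟶ V') :
    (adj.whiskerRight S).homEquiv D (G ⋙ V')
        (Functor.whiskerRight δ K ≫ Functor.whiskerLeft G ψ) =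
      δ ≫ Functor.whiskerLeft G ((adj.whiskerRight Y).homEquiv V V' ψ) := by
  rw [← whiskerRight_homEquiv_whiskerLeft]
  exact (adj.whiskerRight S).homEquiv_naturality_left δ _

end CategoryTheory.Adjunction

theorem RightUniversal.whiskerRight {X : Type u₁} [Category.{v₁} X]
    {Y : Type u₂} [Category.{v₂} Y] {A : Type u₃} [Category.{v₃} A]
    {B : Type u₄} [Category.{v₄} B] {S : Type u} [SmallCategory S]
    {F : S ⥤ X} {G : S ⥤ Y} {T : X ⥤ A} {V : Y ⥤ A} {δ : F ⋙ T ⟶ G ⋙ V}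
    (h : RightUniversal F G T V δ) {K : A ⥤ B} {R : B ⥤ A} (adj : K ⊣ R) :
    RightUniversal F G (T ⋙ K) (V ⋙ K) (Functor.whiskerRight δ K) := by
  intro V' δ'
  let eY := (adj.whiskerRight Y).homEquiv V V'
  let eS := (adj.whiskerRight S).homEquiv (F ⋙ T) (G ⋙ V')
  have transpose (φ : V ⟶ V' ⋙ R) :
      Functor.whiskerRight δ K ≫ Functor.whiskerLeft G (eY.symm φ) = δ' ↔
        δ ≫ Functor.whiskerLeft G φ = eS δ' := by
    rw [← eS.apply_eq_iff_eq, adj.whiskerRight_homEquiv_comp_whiskerLeft, eY.apply_symm_apply]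
  refine eY.symm.existsUnique_congr_right.mp ?_
  simp only [transpose]
  exact h (V' ⋙ R) (eS δ')

/-- A functor `K` admitting a right adjoint preserves right universal connected pairs. -/
theorem rightUniversal_whisker_of_isLeftAdjoint {X : Type u₁} [Category.{v₁} X]
    {Y : Type u₂} [Category.{v₂} Y] {A : Type u₃} [Category.{v₃} A]
    {B : Type u₄} [Category.{v₄} B] {S : Type u} [SmallCategory S]
    (F : S ⥤ X) (G : S ⥤ Y) (T : X ⥤ A) (V : Y ⥤ A) (δ : F ⋙ T ⟶ G ⋙ V)
    (h : RightUniversal F G T V δ) (K : A ⥤ B) [K.IsLeftAdjoint] :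
    RightUniversal F G (T ⋙ K) (V ⋙ K) (Functor.whiskerRight δ K) :=
  h.whiskerRight (Adjunction.ofIsLeftAdjoint K)
end

section
/- Let (T, δ, V) be a left universal S-connected pair (i.e. for every T' : X → A and natural transformation δ' : T'∘F ⟶ V∘G there is a unique ψ : T' ⟶ T with δ ∘ (ψ ∘ F) = δ'). If K : A → B is a functor admitting a left adjoint, then (K∘T, K∘δ, K∘V) is also left universal. -/
/-!
For a left adjoint `L ⊣ K`, whiskering the adjunction gives adjunctions between functor
categories, so `(T' ⋙ L ⟶ T) ≃ (T' ⟶ T ⋙ K)` and `(F ⋙ T' ⋙ L ⟶ G ⋙ V) ≃ (F ⋙ T' ⟶ G ⋙ V ⋙ K)`.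
These transposes conjugate "compose with `δ`" into "compose with `K δ`", so bijectivity of the
former for `T' ⋙ L` gives bijectivity of the latter for `T'`.
-/

open CategoryTheory

universe v₁ v₂ v₃ v₄ u₁ u₂ u₃ u₄ u

/-- A left universal `S`-connected pair `(T, δ, V)`: every connecting morphism
`δ' : T'∘F ⟶ V∘G` factors uniquely through `δ` via a natural transformation
`T' ⟶ T` whiskered with `F`. -/
def LeftUniversal {X : Type u₁} [Category.{v₁} X] {Y : Type u₂} [Category.{v₂} Y]
    {A : Type u₃} [Category.{v₃} A] {S : Type u} [SmallCategory S]
    (F : S ⥤ X) (G : S ⥤ Y) (T : X ⥤ A) (V : Y ⥤ A) (δ : F ⋙ T ⟶ G ⋙ V) : Prop :=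
  ∀ (T' : X ⥤ A) (δ' : F ⋙ T' ⟶ G ⋙ V),
    ∃! ψ : T' ⟶ T, Functor.whiskerLeft F ψ ≫ δ = δ'

section

variable {X : Type u₁} [Category.{v₁} X] {Y : Type u₂} [Category.{v₂} Y]
  {A : Type u₃} [Category.{v₃} A] {B : Type u₄} [Category.{v₄} B] {S : Type u} [SmallCategory S]
  {F : S ⥤ X} {G : S ⥤ Y} {T : X ⥤ A} {V : Y ⥤ A} {δ : F ⋙ T ⟶ G ⋙ V}

theorem leftUniversal_iff_bijective :
    LeftUniversal F G T V δ ↔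
      ∀ T' : X ⥤ A, Function.Bijective fun ψ : T' ⟶ T => Functor.whiskerLeft F ψ ≫ δ :=
  forall_congr' fun _ => Function.bijective_iff_existsUnique _ |>.symm

theorem CategoryTheory.Adjunction.whiskerLeft_homEquiv_comp_whiskerRight {L : A ⥤ B} {K : B ⥤ A}
    (adj : L ⊣ K) {T' : X ⥤ A} {T : X ⥤ B} {V : Y ⥤ B} (δ : F ⋙ T ⟶ G ⋙ V) (ψ : T' ⋙ L ⟶ T) :
    Functor.whiskerLeft F ((adj.whiskerRight X).homEquiv T' T ψ) ≫ Functor.whiskerRight δ K =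
      (adj.whiskerRight S).homEquiv (F ⋙ T') (G ⋙ V) (Functor.whiskerLeft F ψ ≫ δ) := by
  ext s
  simp only [Adjunction.homEquiv_unit]
  simp

end

/-- A functor `K` admitting a left adjoint preserves left universal connected pairs. -/
theorem leftUniversal_whisker_of_isRightAdjoint {X : Type u₁} [Category.{v₁} X]
    {Y : Type u₂} [Category.{v₂} Y] {A : Type u₃} [Category.{v₃} A]
    {B : Type u₄} [Category.{v₄} B] {S : Type u} [SmallCategory S]
    (F : S ⥤ X) (G : S ⥤ Y) (T : X ⥤ A) (V : Y ⥤ A) (δ : F ⋙ T ⟶ G ⋙ V)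
    (h : LeftUniversal F G T V δ) (K : A ⥤ B) [K.IsRightAdjoint] :
    LeftUniversal F G (T ⋙ K) (V ⋙ K) (Functor.whiskerRight δ K) := by
  rw [leftUniversal_iff_bijective] at h ⊢
  intro T'
  let adj := Adjunction.ofIsRightAdjoint K
  have hconj : (fun φ : T' ⟶ T ⋙ K => Functor.whiskerLeft F φ ≫ Functor.whiskerRight δ K) =
      (adj.whiskerRight S).homEquiv (F ⋙ T') (G ⋙ V) ∘
        (fun ψ : T' ⋙ K.leftAdjoint ⟶ T => Functor.whiskerLeft F ψ ≫ δ) ∘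
          ((adj.whiskerRight X).homEquiv T' T).symm := by
    funext φ
    simp only [Function.comp_apply, ← adj.whiskerLeft_homEquiv_comp_whiskerRight,
      Equiv.apply_symm_apply]
  rw [hconj, Equiv.comp_bijective, Equiv.bijective_comp]
  exact h _
end
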